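/- For all α, β ∈ ℂ, the algebras 𝔠₂₆(α, β) and 𝔠₂₆(β, α) are isomorphic, where 𝔠₂₆(α, β) is the commutative algebra on ℂ⁵ with basis e₁,…,e₅ and nonzero basis products e₁e₁ = α e₅, e₁e₂ = e₃, e₂e₂ = β e₅, e₁e₃ = e₄ + e₅, e₂e₃ = e₄, e₃e₃ = e₅. -/

import Mathlib

/-- Structure constants of the algebra 𝔠₂₆(α, β) on ℂ⁵ (basis `e₁, …, e₅` indexed by
`Fin 5`). Nonzero products: e₁e₁ = α e₅, e₁e₂ = e₃, e₂e₂ = β e₅, e₁e₃ = e₄ + e₅,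
e₂e₃ = e₄, e₃e₃ = e₅ (extended symmetrically). -/
noncomputable def tbl26 (α β : ℂ) : Fin 5 → Fin 5 → Fin 5 → ℂ :=
  ![![![0,0,0,0,α], ![0,0,1,0,0], ![0,0,0,1,1], 0, 0],
    ![![0,0,1,0,0], ![0,0,0,0,β], ![0,0,0,1,0], 0, 0],
    ![![0,0,0,1,1], ![0,0,0,1,0], ![0,0,0,0,1], 0, 0],
    0,
    0]

/-- The bilinear multiplication of the algebra 𝔠₂₆(α, β) on ℂ⁵. -/
noncomputable def mul26 (α β : ℂ) (x y : Fin 5 → ℂ) : Fin 5 → ℂ :=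
  fun k => ∑ i, ∑ j, x i * y j * tbl26 α β i j k

/-! The linear involution `e₁ ↦ -e₂, e₂ ↦ -e₁, e₃ ↦ e₃, e₄ ↦ -e₄ - e₅, e₅ ↦ e₅` exchanges the
squares `e₁e₁` and `e₂e₂`; since it also sends `e₄ + e₅ ↦ -e₄` and `e₄ ↦ -(e₄ + e₅)`, it respects
`e₁e₃ = e₄ + e₅` and `e₂e₃ = e₄`, so it carries `𝔠₂₆(α, β)` onto `𝔠₂₆(β, α)`. -/

lemma mul26_eq (α β : ℂ) (x y : Fin 5 → ℂ) :
    mul26 α β x y = ![0, 0, x 0 * y 1 + x 1 * y 0,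
      x 0 * y 2 + x 2 * y 0 + x 1 * y 2 + x 2 * y 1,
      α * x 0 * y 0 + β * x 1 * y 1 + x 0 * y 2 + x 2 * y 0 + x 2 * y 2] := by
  funext k
  fin_cases k <;> simp [mul26, tbl26, Fin.sum_univ_five] <;> ring

noncomputable def swap26 : (Fin 5 → ℂ) →ₗ[ℂ] (Fin 5 → ℂ) where
  toFun x := ![-x 1, -x 0, x 2, -x 3, -x 3 + x 4]
  map_add' x y := by
    funext k
    fin_cases k <;> simp <;> ring
  map_smul' c x := by
    funext k
    fin_cases k <;> simp [mul_add]

lemma swap26_involutive : Function.Involutive swap26 := by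
  intro x
  funext k
  fin_cases k <;> simp [swap26]

lemma swap26_mul26 (α β : ℂ) (x y : Fin 5 → ℂ) :
    swap26 (mul26 α β x y) = mul26 β α (swap26 x) (swap26 y) := by
  rw [mul26_eq, mul26_eq]
  funext k
  fin_cases k <;> simp [swap26] <;> ring

theorem c26_iso (α β : ℂ) :
    ∃ φ : (Fin 5 → ℂ) ≃ₗ[ℂ] (Fin 5 → ℂ),
      ∀ x y : Fin 5 → ℂ, φ (mul26 α β x y) = mul26 β α (φ x) (φ y) :=
  ⟨LinearEquiv.ofInvolutive swap26 swap26_involutive, swap26_mul26 α β⟩
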